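/- There is no correct compositional translation from SYNCSIMPLE to LOCKSIMPLE with a single lock, for either initial store value (empty or full). -/
import Mathlib


/-- Symbols of SYNCSIMPLE: `!` (bang) and `?` (ques). -/
inductive SSym | bang | ques
deriving DecidableEq

/-- A SYNCSIMPLE subprocess: a string over {!,?} ending with `0` (false) or `✓` (true). -/
abbrev SSub := List SSym × Bool

/-- A SYNCSIMPLE process: a multiset of subprocesses. -/
abbrev SProc := Multiset SSub

/-- The SYS reduction: a leading `!` and a leading `?` of two subprocesses are consumed. -/
def SysStep (P Q : SProc) : Prop :=
  ∃ (u1 u2 : List SSym) (b1 b2 : Bool) (R : SProc),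
    P = (SSym.bang :: u1, b1) ::ₘ (SSym.ques :: u2, b2) ::ₘ R ∧
    Q = (u1, b1) ::ₘ (u2, b2) ::ₘ R

/-- A process is successful if it contains the subprocess `✓`. -/
def SSuccessful (P : SProc) : Prop := (([], true) : SSub) ∈ P

def SMayConv (P : SProc) : Prop :=
  ∃ Q, Relation.ReflTransGen SysStep P Q ∧ SSuccessful Q

def SMustConv (P : SProc) : Prop :=
  ∀ Q, Relation.ReflTransGen SysStep P Q → SMayConv Q

/-- Lock operations: put `P_i` and take `T_i`. -/
inductive LOp | put | take
deriving DecidableEq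

abbrev LSym (k : ℕ) := LOp × Fin k
abbrev LSub (k : ℕ) := List (LSym k) × Bool
abbrev LProc (k : ℕ) := Multiset (LSub k)
/-- The store of `k` locks: `true` = full (■), `false` = empty (□). -/
abbrev Store (k : ℕ) := Fin k → Bool

/-- LOCKSIMPLE step: `P_i` fills an empty lock `i` (blocks if full);
    `T_i` empties lock `i` and never blocks. -/
def LockStep {k : ℕ} : (LProc k × Store k) → (LProc k × Store k) → Prop :=
  fun s t => ∃ (i : Fin k) (u : List (LSym k)) (b : Bool) (R : LProc k),
    ((s.1 = ((LOp.put, i) :: u, b) ::ₘ R ∧ s.2 i = false ∧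
      t.1 = (u, b) ::ₘ R ∧ t.2 = Function.update s.2 i true) ∨
     (s.1 = ((LOp.take, i) :: u, b) ::ₘ R ∧
      t.1 = (u, b) ::ₘ R ∧ t.2 = Function.update s.2 i false))

def LSuccessful {k : ℕ} (s : LProc k × Store k) : Prop := (([], true) : LSub k) ∈ s.1

def LMayConv {k : ℕ} (s : LProc k × Store k) : Prop :=
  ∃ t, Relation.ReflTransGen LockStep s t ∧ LSuccessful t

def LMustConv {k : ℕ} (s : LProc k × Store k) : Prop :=
  ∀ t, Relation.ReflTransGen LockStep s t → LMayConv t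

/-- The compositional translation determined by the strings `tb = τ(!)` and `tq = τ(?)`,
    applied to a subprocess. -/
def transSub {k : ℕ} (tb tq : List (LSym k)) (u : SSub) : LSub k :=
  (u.1.flatMap (fun c => match c with | SSym.bang => tb | SSym.ques => tq), u.2)

/-- The compositional translation applied to a process. -/
def transProc {k : ℕ} (tb tq : List (LSym k)) (P : SProc) : LProc k :=
  P.map (transSub tb tq)

/-- Correctness of the compositional translation `(tb, tq)` with initial store `IS`:
    may- and must-convergence are preserved and reflected. -/
def Correct {k : ℕ} (IS : Store k) (tb tq : List (LSym k)) : Prop :=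
  ∀ P : SProc,
    (SMayConv P ↔ LMayConv (transProc tb tq P, IS)) ∧
    (SMustConv P ↔ LMustConv (transProc tb tq P, IS))

/-- The solo execution of the string `s` from store `IS` reaches the point where
    `(put, i) :: rest` remains and deadlocks there since lock `i` is full. -/
def SoloBlocked {k : ℕ} (IS : Store k) (s : List (LSym k)) (i : Fin k)
    (rest : List (LSym k)) : Prop :=
  ∃ C : Store k,
    Relation.ReflTransGen LockStep (({(s, false)} : LProc k), IS)
      (({((LOp.put, i) :: rest, false)} : LProc k), C) ∧
    C i = true

/-- Blocking type `P_i`: the blocking prefix is `R P_i` with `R` free of `P_i, T_i`. -/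
def BlockingTypeP {k : ℕ} (IS : Store k) (s : List (LSym k)) (i : Fin k) : Prop :=
  ∃ r rest, s = r ++ (LOp.put, i) :: rest ∧ (∀ x ∈ r, x.2 ≠ i) ∧
    SoloBlocked IS s i rest

/-- Blocking type `P_i P_i`: the blocking prefix is `R₁ P_i R₂ P_i` with
    `R₂` free of `P_i, T_i`, deadlocking exactly before the last `P_i`. -/
def BlockingTypePP {k : ℕ} (IS : Store k) (s : List (LSym k)) (i : Fin k) : Prop :=
  ∃ r1 r2 rest, s = r1 ++ (LOp.put, i) :: r2 ++ (LOp.put, i) :: rest ∧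
    (∀ x ∈ r2, x.2 ≠ i) ∧ SoloBlocked IS s i rest


/-! ### Auxiliary development for the impossibility proof -/

/-- The constant store with value `b` (there is only one lock). -/
def stc (b : Bool) : Store 1 := fun _ => b

lemma store_eq_stc (σ : Store 1) : σ = stc (σ 0) := by
  funext i
  have hi : i = 0 := Subsingleton.elim i 0
  rw [hi]; rfl

/-- Deterministic solo run of a single-lock string from lock state `b`:
`some b'` if it completes with final lock state `b'`, `none` if it blocks. -/
def soloRun : Bool → List (LSym 1) → Option Bool
  | b, [] => some b
  | _, (LOp.take, _) :: u => soloRun false u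
  | b, (LOp.put, _) :: u => if b then none else soloRun true u

lemma step_take (i : Fin 1) (u : List (LSym 1)) (fl : Bool) (R : LProc 1) (σ : Store 1) :
    LockStep ((((LOp.take, i) :: u, fl) ::ₘ R), σ) (((u, fl) ::ₘ R), stc false) := by
  refine ⟨i, u, fl, R, Or.inr ⟨rfl, rfl, ?_⟩⟩
  funext j
  have hj : j = i := Subsingleton.elim j i
  rw [hj, Function.update_self]; rfl

lemma step_put (i : Fin 1) (u : List (LSym 1)) (fl : Bool) (R : LProc 1) :
    LockStep ((((LOp.put, i) :: u, fl) ::ₘ R), stc false) (((u, fl) ::ₘ R), stc true) := by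
  refine ⟨i, u, fl, R, Or.inl ⟨rfl, rfl, rfl, ?_⟩⟩
  funext j
  have hj : j = i := Subsingleton.elim j i
  rw [hj, Function.update_self]; rfl

lemma solo_run_some (s : List (LSym 1)) : ∀ (b b' : Bool) (fl : Bool) (R : LProc 1),
    soloRun b s = some b' →
    Relation.ReflTransGen LockStep (((s, fl) ::ₘ R), stc b) ((([], fl) ::ₘ R), stc b') := by
  induction s with
  | nil =>
    intro b b' fl R h
    simp only [soloRun, Option.some.injEq] at h
    rw [h]
  | cons hd tl ih =>
    obtain ⟨op, i⟩ := hd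
    intro b b' fl R h
    cases op with
    | take =>
      have h' : soloRun false tl = some b' := h
      exact Relation.ReflTransGen.head (step_take i tl fl R _) (ih false b' fl R h')
    | put =>
      cases b with
      | true => simp [soloRun] at h
      | false =>
        have h' : soloRun true tl = some b' := by simpa [soloRun] using h
        exact Relation.ReflTransGen.head (step_put i tl fl R) (ih true b' fl R h')

lemma solo_run_none (s : List (LSym 1)) : ∀ (b fl : Bool) (R : LProc 1),
    soloRun b s = none →
    ∃ rest, Relation.ReflTransGen LockStep (((s, fl) ::ₘ R), stc b)
      ((((LOp.put, 0) :: rest, fl) ::ₘ R), stc true) := by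
  induction s with
  | nil => intro b fl R h; simp [soloRun] at h
  | cons hd tl ih =>
    obtain ⟨op, i⟩ := hd
    intro b fl R h
    cases op with
    | take =>
      have h' : soloRun false tl = none := h
      obtain ⟨rest, hr⟩ := ih false fl R h'
      exact ⟨rest, Relation.ReflTransGen.head (step_take i tl fl R _) hr⟩
    | put =>
      cases b with
      | true =>
        refine ⟨tl, ?_⟩
        have hi : i = 0 := Subsingleton.elim i 0
        rw [hi]
      | false =>
        have h' : soloRun true tl = none := by simpa [soloRun] using h
        obtain ⟨rest, hr⟩ := ih true fl R h'
        exact ⟨rest, Relation.ReflTransGen.head (step_put i tl fl R) hr⟩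

lemma soloRun_none_true (s : List (LSym 1)) (h : soloRun false s = none) :
    soloRun true s = none := by
  cases s with
  | nil => simp [soloRun] at h
  | cons hd tl =>
    obtain ⟨op, i⟩ := hd
    cases op with
    | put => simp [soloRun]
    | take => exact h

lemma lsucc_head (R : LProc 1) (σ : Store 1) :
    LSuccessful ((((([], true) : LSub 1) ::ₘ R : LProc 1), σ)) :=
  Multiset.mem_cons_self _ _

/-- The deadlocked pair: both threads at a `put` with the lock full; no step possible. -/
lemma deadlock_no_step (r1 r2 : List (LSym 1)) (t : LProc 1 × Store 1) :
    ¬ LockStep (((((LOp.put, 0) :: r1, true) ::ₘ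
        (((LOp.put, 0) :: r2, true) ::ₘ 0)) : LProc 1), stc true) t := by
  rintro ⟨i, u, b, R, ⟨-, h2, -, -⟩ | ⟨h1, -, -⟩⟩
  · exact absurd h2 (by simp [stc])
  · have hm : (((LOp.take, i) :: u, b) : LSub 1) ∈
        (((((LOp.put, 0) :: r1, true) ::ₘ (((LOp.put, 0) :: r2, true) ::ₘ 0)) : LProc 1),
          stc true).1 := by
      rw [h1]; exact Multiset.mem_cons_self _ _
    replace hm : (((LOp.take, i) :: u, b) : LSub 1) ∈
        ((((LOp.put, 0) :: r1, true) ::ₘ (((LOp.put, 0) :: r2, true) ::ₘ 0)) : LProc 1) := hm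
    rcases Multiset.mem_cons.mp hm with h | h
    · simp at h
    · rcases Multiset.mem_cons.mp h with h' | h'
      · simp at h'
      · simp at h'

lemma deadlock_not_may (r1 r2 : List (LSym 1)) :
    ¬ LMayConv ((((((LOp.put, 0) :: r1, true) ::ₘ
        (((LOp.put, 0) :: r2, true) ::ₘ 0)) : LProc 1), stc true)) := by
  rintro ⟨t, hreach, hsucc⟩
  rcases Relation.ReflTransGen.cases_head hreach with rfl | ⟨c, hc, -⟩
  · unfold LSuccessful at hsucc
    replace hsucc : (([], true) : LSub 1) ∈
        ((((LOp.put, 0) :: r1, true) ::ₘ (((LOp.put, 0) :: r2, true) ::ₘ 0)) : LProc 1) := hsucc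
    rcases Multiset.mem_cons.mp hsucc with h | h
    · simp at h
    · rcases Multiset.mem_cons.mp h with h' | h'
      · simp at h'
      · simp at h'
  · exact deadlock_no_step r1 r2 c hc

/-- No SYS step out of a singleton process. -/
lemma no_step_singleton (x : SSub) (Q : SProc) : ¬ SysStep ({x} : SProc) Q := by
  rintro ⟨u1, u2, b1, b2, R, h1, -⟩
  have := congrArg Multiset.card h1
  simp at this

lemma not_smay_singleton_bang : ¬ SMayConv ({([SSym.bang], true)} : SProc) := by
  rintro ⟨Q, hreach, hsucc⟩
  rcases Relation.ReflTransGen.cases_head hreach with rfl | ⟨c, hc, -⟩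
  · rw [SSuccessful, Multiset.mem_singleton] at hsucc
    simp at hsucc
  · exact no_step_singleton _ c hc

lemma not_smay_singleton_ques : ¬ SMayConv ({([SSym.ques], true)} : SProc) := by
  rintro ⟨Q, hreach, hsucc⟩
  rcases Relation.ReflTransGen.cases_head hreach with rfl | ⟨c, hc, -⟩
  · rw [SSuccessful, Multiset.mem_singleton] at hsucc
    simp at hsucc
  · exact no_step_singleton _ c hc

/-- The SYNCSIMPLE process `!✓ ‖ ?✓`. -/
def P0 : SProc := ([SSym.bang], true) ::ₘ (([SSym.ques], true) ::ₘ 0)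

/-- The result of its unique step. -/
def P1 : SProc := (([], true) : SSub) ::ₘ ((([], true) : SSub) ::ₘ 0)

lemma step_P0 {Q : SProc} (h : SysStep P0 Q) : Q = P1 := by
  obtain ⟨u1, u2, b1, b2, R, h1, h2⟩ := h
  have hmem1 : ((SSym.bang :: u1, b1) : SSub) ∈ P0 := by
    rw [h1]; exact Multiset.mem_cons_self _ _
  have hmem2 : ((SSym.ques :: u2, b2) : SSub) ∈ P0 := by
    rw [h1]; exact Multiset.mem_cons_of_mem (Multiset.mem_cons_self _ _)
  have e1 : u1 = [] ∧ b1 = true := by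
    rcases Multiset.mem_cons.mp hmem1 with h | h
    · simp only [Prod.mk.injEq, List.cons.injEq] at h
      exact ⟨h.1.2, h.2⟩
    · rcases Multiset.mem_cons.mp h with h' | h'
      · simp at h'
      · simp at h'
  have e2 : u2 = [] ∧ b2 = true := by
    rcases Multiset.mem_cons.mp hmem2 with h | h
    · simp at h
    · rcases Multiset.mem_cons.mp h with h' | h'
      · simp only [Prod.mk.injEq, List.cons.injEq] at h'
        exact ⟨h'.1.2, h'.2⟩
      · simp at h'
  obtain ⟨rfl, rfl⟩ := e1
  obtain ⟨rfl, rfl⟩ := e2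
  have hR : R = 0 := by
    have h1' : P0 = ([SSym.bang], true) ::ₘ (([SSym.ques], true) ::ₘ R) := h1
    rw [P0] at h1'
    have := (Multiset.cons_inj_right _).mp h1'
    exact ((Multiset.cons_inj_right _).mp this).symm
  rw [hR] at h2
  exact h2

lemma no_step_P1 (Q : SProc) : ¬ SysStep P1 Q := by
  rintro ⟨u1, u2, b1, b2, R, h1, -⟩
  have hmem1 : ((SSym.bang :: u1, b1) : SSub) ∈ P1 := by
    rw [h1]; exact Multiset.mem_cons_self _ _
  rcases Multiset.mem_cons.mp hmem1 with h | h
  · simp at h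
  · rcases Multiset.mem_cons.mp h with h' | h'
    · simp at h'
    · simp at h'

lemma smay_P1 : SMayConv P1 := ⟨P1, Relation.ReflTransGen.refl, Multiset.mem_cons_self _ _⟩

lemma smay_P0 : SMayConv P0 := by
  refine ⟨P1, Relation.ReflTransGen.single ?_, Multiset.mem_cons_self _ _⟩
  exact ⟨[], [], true, true, 0, rfl, rfl⟩

lemma smust_P0 : SMustConv P0 := by
  intro Q hreach
  have hchar : Q = P0 ∨ Q = P1 := by
    induction hreach with
    | refl => exact Or.inl rfl
    | tail _ hstep ih =>
      rcases ih with rfl | rfl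
      · exact Or.inr (step_P0 hstep)
      · exact absurd hstep (no_step_P1 _)
  rcases hchar with rfl | rfl
  · exact smay_P0
  · exact smay_P1

/-- there is no correct compositional translation from SYNCSIMPLE
to LOCKSIMPLE with a single lock, for either initial store value. -/
theorem no_correct_translation_one_lock :
    ∀ (IS : Store 1) (tb tq : List (LSym 1)), ¬ Correct IS tb tq := by
  intro IS tb tq hC
  -- the translations of `!✓` and `?✓` block when run solo from `IS`
  have htrB : transProc tb tq ({([SSym.bang], true)} : SProc) = ((tb, true) ::ₘ 0 : LProc 1) := by
    simp [transProc, transSub]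
  have htrQ : transProc tb tq ({([SSym.ques], true)} : SProc) = ((tq, true) ::ₘ 0 : LProc 1) := by
    simp [transProc, transSub]
  have htb : soloRun (IS 0) tb = none := by
    cases h : soloRun (IS 0) tb with
    | none => rfl
    | some b' =>
      exfalso
      apply not_smay_singleton_bang
      rw [(hC ({([SSym.bang], true)} : SProc)).1, htrB]
      refine ⟨((([], true) ::ₘ 0 : LProc 1), stc b'), ?_, lsucc_head 0 _⟩
      rw [store_eq_stc IS]
      exact solo_run_some tb (IS 0) b' true 0 h
  have htq : soloRun (IS 0) tq = none := by
    cases h : soloRun (IS 0) tq with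
    | none => rfl
    | some b' =>
      exfalso
      apply not_smay_singleton_ques
      rw [(hC ({([SSym.ques], true)} : SProc)).1, htrQ]
      refine ⟨((([], true) ::ₘ 0 : LProc 1), stc b'), ?_, lsucc_head 0 _⟩
      rw [store_eq_stc IS]
      exact solo_run_some tq (IS 0) b' true 0 h
  -- hence `tb` also blocks when started with the lock full
  have htb' : soloRun true tb = none := by
    cases h0 : IS 0 with
    | true => rw [h0] at htb; exact htb
    | false => rw [h0] at htb; exact soloRun_none_true tb htb
  -- `!✓ ‖ ?✓` is must-convergent, so its translation is
  have hLmust : LMustConv ((transProc tb tq P0, IS) : LProc 1 × Store 1) :=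
    (hC P0).2.mp smust_P0
  have htrP0 : transProc tb tq P0 = ((tb, true) ::ₘ ((tq, true) ::ₘ 0) : LProc 1) := by
    simp [transProc, transSub, P0]
  -- schedule: run `tq` until it blocks, then run `tb` until it blocks
  obtain ⟨r2, hrun2⟩ := solo_run_none tq (IS 0) true ((tb, true) ::ₘ 0) htq
  obtain ⟨r1, hrun1⟩ := solo_run_none tb true true ((((LOp.put, 0) :: r2, true) : LSub 1) ::ₘ 0) htb'
  have hswap1 : ((tb, true) ::ₘ ((tq, true) ::ₘ 0) : LProc 1)
      = ((tq, true) ::ₘ ((tb, true) ::ₘ 0) : LProc 1) := Multiset.cons_swap _ _ _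
  have hswap2 : ((((LOp.put, 0) :: r2, true) : LSub 1) ::ₘ ((tb, true) ::ₘ 0) : LProc 1)
      = ((tb, true) ::ₘ ((((LOp.put, 0) :: r2, true) : LSub 1) ::ₘ 0) : LProc 1) :=
    Multiset.cons_swap _ _ _
  have hreach : Relation.ReflTransGen LockStep ((transProc tb tq P0, IS) : LProc 1 × Store 1)
      (((((LOp.put, 0) :: r1, true) ::ₘ ((((LOp.put, 0) :: r2, true) : LSub 1) ::ₘ 0)) : LProc 1),
        stc true) := by
    rw [htrP0, store_eq_stc IS, hswap1]
    refine Relation.ReflTransGen.trans hrun2 ?_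
    rw [hswap2]
    exact hrun1
  exact deadlock_not_may r1 r2 (hLmust _ hreach)
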